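/- arXiv:math/0210469 — 3 statements merged into one kernel-verified Lean document; each statement's English description precedes it below -/
import Mathlib

section
/- Let (Ψ_t) be a sequence of complex-valued square-integrable random variables such that E[Ψ_{t+1} | F_t] = λΨ_t for a complex number λ with Re(λ) ≥ 1/2, Ψ_0 is deterministic, and E[|Ψ_{t+1} − Ψ_t|² | F_t] ≤ R almost surely for all t. Then for all t, Var[Ψ_t] := E[|Ψ_t|²] − |E[Ψ_t]|² ≤ R / (2(1 − Re(λ))), assuming Re(λ) < 1. -/
open MeasureTheory

section Aux

variable {Ω : Type*} {m m0 : MeasurableSpace Ω} {μ : Measure Ω}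

private lemma aux_integrable_mul {f g : Ω → ℝ} (hf : MemLp f 2 μ) (hg : MemLp g 2 μ) :
    Integrable (fun ω => f ω * g ω) μ := by
  have h1 : Integrable (fun ω => (f ω + g ω) ^ 2) μ := (hf.add hg).integrable_sq
  have h2 := hf.integrable_sq
  have h3 := hg.integrable_sq
  have h := ((h1.sub h2).sub h3).div_const 2
  refine h.congr (Filter.Eventually.of_forall fun ω => ?_)
  simp only [Pi.sub_apply]
  ring

private lemma aux_integral_re {f : Ω → ℂ} (hf : Integrable f μ) :
    ∫ ω, (f ω).re ∂μ = (∫ ω, f ω ∂μ).re := by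
  simpa using integral_re (𝕜 := ℂ) hf

private lemma aux_integral_im {f : Ω → ℂ} (hf : Integrable f μ) :
    ∫ ω, (f ω).im ∂μ = (∫ ω, f ω ∂μ).im := by
  simpa using integral_im (𝕜 := ℂ) hf

private lemma aux_condexp_re [IsFiniteMeasure μ] (hm : m ≤ m0) {f : Ω → ℂ}
    (hf : Integrable f μ) :
    μ[fun ω => (f ω).re | m] =ᵐ[μ] fun ω => ((μ[f | m]) ω).re := by
  refine (ae_eq_condExp_of_forall_setIntegral_eq hm ?_
    (fun s _ _ => ?_) (fun s hs _ => ?_) ?_).symm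
  · simpa using hf.re
  · exact (integrable_condExp (f := f) (m := m)).re.integrableOn.congr_fun
      (fun ω _ => by simp) (hm s (by assumption))
  · rw [aux_integral_re integrable_condExp.integrableOn, aux_integral_re hf.integrableOn,
      setIntegral_condExp hm hf hs]
  · exact (Complex.continuous_re.comp_stronglyMeasurable
      stronglyMeasurable_condExp).aestronglyMeasurable

private lemma aux_condexp_im [IsFiniteMeasure μ] (hm : m ≤ m0) {f : Ω → ℂ}
    (hf : Integrable f μ) :
    μ[fun ω => (f ω).im | m] =ᵐ[μ] fun ω => ((μ[f | m]) ω).im := by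
  refine (ae_eq_condExp_of_forall_setIntegral_eq hm ?_
    (fun s _ _ => ?_) (fun s hs _ => ?_) ?_).symm
  · simpa using hf.im
  · exact (integrable_condExp (f := f) (m := m)).im.integrableOn.congr_fun
      (fun ω _ => by simp) (hm s (by assumption))
  · rw [aux_integral_im integrable_condExp.integrableOn, aux_integral_im hf.integrableOn,
      setIntegral_condExp hm hf hs]
  · exact (Complex.continuous_im.comp_stronglyMeasurable
      stronglyMeasurable_condExp).aestronglyMeasurable

end Aux

/-- If `(Ψ t)` are square-integrable complex random variables adapted to a filtration `ℱ`
with `E[Ψ (t+1) | ℱ t] = lam • Ψ t`, `1/2 ≤ Re lam < 1`, `Ψ 0` deterministic, and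
`E[|Ψ (t+1) - Ψ t|² | ℱ t] ≤ R` a.s., then `Var[Ψ t] ≤ R / (2 (1 - Re lam))` for all `t`. -/
theorem rudvalis_stmt_2 {Ω : Type*} {m0 : MeasurableSpace Ω} {μ : Measure Ω}
    [IsProbabilityMeasure μ] (ℱ : Filtration ℕ m0)
    (Ψ : ℕ → Ω → ℂ) (lam : ℂ) (R : ℝ)
    (hadapt : Adapted ℱ Ψ)
    (hL2 : ∀ t, MemLp (Ψ t) 2 μ)
    (hre : 1 / 2 ≤ lam.re) (hre1 : lam.re < 1)
    (hdet : ∃ c : ℂ, Ψ 0 = fun _ => c)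
    (hcond : ∀ t, μ[Ψ (t + 1) | ℱ t] =ᵐ[μ] fun ω => lam * Ψ t ω)
    (hdiff : ∀ t, ∀ᵐ ω ∂μ,
      (μ[fun ω' => ‖Ψ (t + 1) ω' - Ψ t ω'‖ ^ 2 | ℱ t]) ω ≤ R) :
    ∀ t, (∫ ω, ‖Ψ t ω‖ ^ 2 ∂μ) - ‖∫ ω, Ψ t ω ∂μ‖ ^ 2
      ≤ R / (2 * (1 - lam.re)) := by
  have hint : ∀ t, Integrable (Ψ t) μ := fun t => (hL2 t).integrable one_le_two
  have hD2 : ∀ t, MemLp (fun ω => Ψ (t + 1) ω - Ψ t ω) 2 μ :=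
    fun t => (hL2 (t + 1)).sub (hL2 t)
  have habs : ∀ f : Ω → ℂ, MemLp f 2 μ → Integrable (fun ω => ‖f ω‖ ^ 2) μ := by
    intro f hf
    refine ((memLp_two_iff_integrable_sq_norm hf.1).mp hf).congr
      (Filter.Eventually.of_forall fun ω => ?_)
    simp
  -- the conditional expectation of the increment
  have hcondD : ∀ t, μ[fun ω => Ψ (t + 1) ω - Ψ t ω | ℱ t] =ᵐ[μ]
      fun ω => (lam - 1) * Ψ t ω := by
    intro t
    have h1 := condExp_sub (μ := μ) (m := ℱ t) (hint (t + 1)) (hint t)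
    have h2 : μ[Ψ t | ℱ t] = Ψ t :=
      condExp_of_stronglyMeasurable (ℱ.le t) (hadapt t).stronglyMeasurable (hint t)
    filter_upwards [h1, hcond t] with ω h1ω h2ω
    have : (fun ω => Ψ (t + 1) ω - Ψ t ω) = Ψ (t + 1) - Ψ t := rfl
    rw [this, h1ω, Pi.sub_apply, h2ω, h2]
    ring
  -- E |Δ|² ≤ R and R ≥ 0
  have hDle : ∀ t, ∫ ω, ‖Ψ (t + 1) ω - Ψ t ω‖ ^ 2 ∂μ ≤ R := by
    intro t
    have h1 := (integral_condExp (μ := μ) (m := ℱ t) (ℱ.le t)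
      (f := fun ω => ‖Ψ (t + 1) ω - Ψ t ω‖ ^ 2)).symm
    rw [h1]
    calc ∫ ω, (μ[fun ω' => ‖Ψ (t + 1) ω' - Ψ t ω'‖ ^ 2 | ℱ t]) ω ∂μ
        ≤ ∫ _, R ∂μ := integral_mono_ae integrable_condExp (integrable_const R) (hdiff t)
      _ = R := by simp
  have hR : 0 ≤ R :=
    le_trans (integral_nonneg fun ω => by positivity) (hDle 0)
  -- the mean recursion
  have hmean : ∀ t, ∫ ω, Ψ (t + 1) ω ∂μ = lam * ∫ ω, Ψ t ω ∂μ := by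
    intro t
    rw [← integral_condExp (ℱ.le t) (f := Ψ (t + 1)), integral_congr_ae (hcond t)]
    simp_rw [← smul_eq_mul]
    rw [integral_smul]
  -- the cross term
  have hcross : ∀ t, ∫ ω, ((Ψ (t + 1) ω - Ψ t ω) * (starRingEnd ℂ) (Ψ t ω)).re ∂μ
      = (lam.re - 1) * ∫ ω, ‖Ψ t ω‖ ^ 2 ∂μ := by
    intro t
    set D : Ω → ℂ := fun ω => Ψ (t + 1) ω - Ψ t ω with hDdef
    have hBre : MemLp (fun ω => (Ψ t ω).re) 2 μ := by simpa using (hL2 t).re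
    have hBim : MemLp (fun ω => (Ψ t ω).im) 2 μ := by simpa using (hL2 t).im
    have hDre : MemLp (fun ω => (D ω).re) 2 μ := by simpa [hDdef] using (hD2 t).re
    have hDim : MemLp (fun ω => (D ω).im) 2 μ := by simpa [hDdef] using (hD2 t).im
    have hBreSM : StronglyMeasurable[ℱ t] (fun ω => (Ψ t ω).re) :=
      Complex.continuous_re.comp_stronglyMeasurable (hadapt t).stronglyMeasurable
    have hBimSM : StronglyMeasurable[ℱ t] (fun ω => (Ψ t ω).im) :=
      Complex.continuous_im.comp_stronglyMeasurable (hadapt t).stronglyMeasurable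
    have hDint : Integrable D μ := (hint (t + 1)).sub (hint t)
    -- real part
    have hre1' : ∫ ω, (Ψ t ω).re * (D ω).re ∂μ
        = ∫ ω, (Ψ t ω).re * ((lam - 1) * Ψ t ω).re ∂μ := by
      have hpull := condExp_mul_of_stronglyMeasurable_left (μ := μ) hBreSM
        (aux_integrable_mul hBre hDre) (hDre.integrable one_le_two)
      have hcre : μ[fun ω => (D ω).re | ℱ t] =ᵐ[μ] fun ω => ((lam - 1) * Ψ t ω).re := by
        filter_upwards [aux_condexp_re (ℱ.le t) hDint, hcondD t] with ω h1 h2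
        rw [h1, h2]
      have e1 : ∫ ω, (Ψ t ω).re * (D ω).re ∂μ
          = ∫ ω, (μ[(fun ω => (Ψ t ω).re) * fun ω => (D ω).re | ℱ t]) ω ∂μ :=
        (integral_condExp (ℱ.le t)).symm
      rw [e1, integral_congr_ae hpull]
      refine integral_congr_ae ?_
      filter_upwards [hcre] with ω hω
      simp only [Pi.mul_apply]
      rw [hω]
    -- imaginary part
    have him1' : ∫ ω, (Ψ t ω).im * (D ω).im ∂μ
        = ∫ ω, (Ψ t ω).im * ((lam - 1) * Ψ t ω).im ∂μ := by
      have hpull := condExp_mul_of_stronglyMeasurable_left (μ := μ) hBimSM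
        (aux_integrable_mul hBim hDim) (hDim.integrable one_le_two)
      have hcim : μ[fun ω => (D ω).im | ℱ t] =ᵐ[μ] fun ω => ((lam - 1) * Ψ t ω).im := by
        filter_upwards [aux_condexp_im (ℱ.le t) hDint, hcondD t] with ω h1 h2
        rw [h1, h2]
      have e1 : ∫ ω, (Ψ t ω).im * (D ω).im ∂μ
          = ∫ ω, (μ[(fun ω => (Ψ t ω).im) * fun ω => (D ω).im | ℱ t]) ω ∂μ :=
        (integral_condExp (ℱ.le t)).symm
      rw [e1, integral_congr_ae hpull]
      refine integral_congr_ae ?_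
      filter_upwards [hcim] with ω hω
      simp only [Pi.mul_apply]
      rw [hω]
    have hsplit : ∫ ω, (D ω * (starRingEnd ℂ) (Ψ t ω)).re ∂μ
        = (∫ ω, (Ψ t ω).re * (D ω).re ∂μ) + ∫ ω, (Ψ t ω).im * (D ω).im ∂μ := by
      rw [← integral_add (aux_integrable_mul hBre hDre) (aux_integrable_mul hBim hDim)]
      refine integral_congr_ae (Filter.Eventually.of_forall fun ω => ?_)
      simp only [Complex.mul_re, Complex.conj_re, Complex.conj_im]
      ring
    have hfinal : (∫ ω, (Ψ t ω).re * ((lam - 1) * Ψ t ω).re ∂μ)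
        + (∫ ω, (Ψ t ω).im * ((lam - 1) * Ψ t ω).im ∂μ)
        = (lam.re - 1) * ∫ ω, ‖Ψ t ω‖ ^ 2 ∂μ := by
      rw [← integral_add
        (aux_integrable_mul hBre (by simpa using ((hL2 t).const_mul (lam - 1)).re))
        (aux_integrable_mul hBim (by simpa using ((hL2 t).const_mul (lam - 1)).im)),
        ← integral_const_mul]
      refine integral_congr_ae (Filter.Eventually.of_forall fun ω => ?_)
      simp only [Complex.mul_re, Complex.mul_im, Complex.sq_norm, Complex.normSq_apply,
        Complex.sub_re, Complex.sub_im, Complex.one_re, Complex.one_im]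
      ring
    rw [hsplit, hre1', him1', hfinal]
  -- second moment recursion
  have hmom : ∀ t, ∫ ω, ‖Ψ (t + 1) ω‖ ^ 2 ∂μ
      = (∫ ω, ‖Ψ (t + 1) ω - Ψ t ω‖ ^ 2 ∂μ)
        + (2 * lam.re - 1) * ∫ ω, ‖Ψ t ω‖ ^ 2 ∂μ := by
    intro t
    have hBre : MemLp (fun ω => (Ψ t ω).re) 2 μ := by simpa using (hL2 t).re
    have hBim : MemLp (fun ω => (Ψ t ω).im) 2 μ := by simpa using (hL2 t).im
    have hDre : MemLp (fun ω => (Ψ (t + 1) ω - Ψ t ω).re) 2 μ := by simpa using (hD2 t).re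
    have hDim : MemLp (fun ω => (Ψ (t + 1) ω - Ψ t ω).im) 2 μ := by simpa using (hD2 t).im
    have hcint : Integrable
        (fun ω => ((Ψ (t + 1) ω - Ψ t ω) * (starRingEnd ℂ) (Ψ t ω)).re) μ := by
      refine ((aux_integrable_mul hBre hDre).add (aux_integrable_mul hBim hDim)).congr
        (Filter.Eventually.of_forall fun ω => ?_)
      simp only [Pi.add_apply, Complex.mul_re, Complex.conj_re, Complex.conj_im]
      ring
    have hpt : ∀ ω, ‖Ψ (t + 1) ω‖ ^ 2
        = ‖Ψ (t + 1) ω - Ψ t ω‖ ^ 2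
          + (2 * ((Ψ (t + 1) ω - Ψ t ω) * (starRingEnd ℂ) (Ψ t ω)).re
            + ‖Ψ t ω‖ ^ 2) := by
      intro ω
      have h := Complex.normSq_add (Ψ (t + 1) ω - Ψ t ω) (Ψ t ω)
      rw [sub_add_cancel] at h
      simp only [Complex.sq_norm]
      rw [h]; ring
    calc ∫ ω, ‖Ψ (t + 1) ω‖ ^ 2 ∂μ
        = ∫ ω, (‖Ψ (t + 1) ω - Ψ t ω‖ ^ 2
            + (2 * ((Ψ (t + 1) ω - Ψ t ω) * (starRingEnd ℂ) (Ψ t ω)).re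
              + ‖Ψ t ω‖ ^ 2)) ∂μ :=
          integral_congr_ae (Filter.Eventually.of_forall hpt)
      _ = (∫ ω, ‖Ψ (t + 1) ω - Ψ t ω‖ ^ 2 ∂μ)
            + ((∫ ω, 2 * ((Ψ (t + 1) ω - Ψ t ω) * (starRingEnd ℂ) (Ψ t ω)).re ∂μ)
              + ∫ ω, ‖Ψ t ω‖ ^ 2 ∂μ) := by
          have e1 : Integrable (fun ω => 2 * ((Ψ (t + 1) ω - Ψ t ω) * (starRingEnd ℂ) (Ψ t ω)).re
              + ‖Ψ t ω‖ ^ 2) μ := (hcint.const_mul 2).add (habs _ (hL2 t))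
          rw [integral_add (habs _ (hD2 t)) e1, integral_add (hcint.const_mul 2) (habs _ (hL2 t))]
      _ = (∫ ω, ‖Ψ (t + 1) ω - Ψ t ω‖ ^ 2 ∂μ)
            + (2 * lam.re - 1) * ∫ ω, ‖Ψ t ω‖ ^ 2 ∂μ := by
          rw [integral_const_mul, hcross t]
          ring
  -- conclusion by induction
  have h2q : (2 * lam.re - 1) ≤ ‖lam‖ ^ 2 := by
    have h := Complex.sq_norm lam
    rw [Complex.normSq_apply] at h
    nlinarith [sq_nonneg lam.im, sq_nonneg (lam.re - 1)]
  have hden : 0 < 2 * (1 - lam.re) := by linarith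
  have hM0 : 0 ≤ R / (2 * (1 - lam.re)) := div_nonneg hR (by linarith)
  have hMeq : R / (2 * (1 - lam.re)) * (2 * (1 - lam.re)) = R :=
    div_mul_cancel₀ R (ne_of_gt hden)
  intro t
  induction t with
  | zero =>
      obtain ⟨c, hc⟩ := hdet
      rw [hc]
      simp only [integral_const, measure_univ, ENNReal.toReal_one, one_smul, probReal_univ]
      rw [sub_self]
      exact hM0
  | succ t ih =>
      have h1 : ‖∫ ω, Ψ (t + 1) ω ∂μ‖ ^ 2
          = ‖lam‖ ^ 2 * ‖∫ ω, Ψ t ω ∂μ‖ ^ 2 := by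
        rw [hmean t, norm_mul]
        ring
      have habsB : (0:ℝ) ≤ ‖∫ ω, Ψ t ω ∂μ‖ ^ 2 := sq_nonneg _
      have hq : (0:ℝ) ≤ 2 * lam.re - 1 := by linarith
      rw [hmom t, h1]
      nlinarith [hDle t, ih, mul_le_mul_of_nonneg_left ih hq,
        mul_le_mul_of_nonneg_right h2q habsB]
end

section
/- For every sufficiently large n, the polynomial f(λ) = λ^n − (1/2)w·λ^{n−1} − (1/2)w^{−1}·λ with w = exp(2πi/n), regarded as the eigenvalue equation f(λ) = 0 of the Rudvalis shuffle with p = 1/2, has a root λ satisfying |λ − (1 − 4π²/n³)| ≤ C/n⁴ for some absolute constant C. -/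
open Real

noncomputable def Complex.abs : AbsoluteValue ℂ ℝ := NormedField.toAbsoluteValue ℂ

lemma Complex.norm_eq_abs (z : ℂ) : ‖z‖ = Complex.abs z := rfl

lemma Complex.abs_exp (z : ℂ) : Complex.abs (Complex.exp z) = Real.exp z.re := Complex.norm_exp z

lemma Complex.abs_ofReal (r : ℝ) : Complex.abs (r : ℂ) = |r| := Complex.norm_real r

lemma Complex.abs_I : Complex.abs Complex.I = 1 := Complex.norm_I

@[simp] lemma Complex.abs_natCast (m : ℕ) : Complex.abs (m : ℂ) = m := Complex.norm_natCast m

@[simp] lemma Complex.abs_two : Complex.abs 2 = 2 := by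
  rw [← Complex.norm_eq_abs]; norm_num

lemma Complex.abs_exp_sub_one_le {x : ℂ} (hx : Complex.abs x ≤ 1) :
    Complex.abs (Complex.exp x - 1) ≤ 2 * Complex.abs x := Complex.norm_exp_sub_one_le hx

lemma exp_half_lt_two : Real.exp (1/2) < 2 := by
  nlinarith [Real.exp_one_lt_d9, Real.exp_pos (1/2),
    Real.exp_add (1/2) (1/2)]

lemma aux_pow_le {ε : ℝ} (h0 : 0 ≤ ε) (h1 : ε ≤ 1) (m : ℕ) :
    (1 - ε)^m ≤ 1 - m*ε + (m*ε)^2/2 := by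
  induction m with
  | zero => norm_num
  | succ k ih =>
    have hk : (0:ℝ) ≤ 1 - ε := by linarith
    have h3 : (1-ε)^(k+1) ≤ (1 - k*ε + (k*ε)^2/2) * (1-ε) := by
      rw [pow_succ]; exact mul_le_mul_of_nonneg_right ih hk
    have hkn : (0:ℝ) ≤ (k:ℝ) := Nat.cast_nonneg k
    push_cast
    nlinarith [sq_nonneg ((k:ℝ)*ε), mul_nonneg (mul_nonneg hkn hkn) (mul_nonneg (mul_nonneg h0 h0) h0)]

lemma aux_le_pow {ε : ℝ} (h1 : ε ≤ 2) (m : ℕ) : 1 - m*ε ≤ (1-ε)^m := by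
  have := one_add_mul_le_pow (a := -ε) (by linarith) m
  calc 1 - m*ε = 1 + m * (-ε) := by ring
  _ ≤ (1 + -ε)^m := this
  _ = (1-ε)^m := by ring_nf

lemma pow_le_two_aux {r x : ℝ} {n i : ℕ} (hr0 : 0 ≤ r) (hr : r ≤ 1 + x) (hx : 0 ≤ x)
    (hnx : (n:ℝ)*x ≤ 1/2) (hin : i ≤ n) : r^i ≤ 2 := by
  calc r^i ≤ (1+x)^i := pow_le_pow_left₀ hr0 hr i
  _ ≤ (1+x)^n := pow_le_pow_right₀ (by linarith) hin
  _ ≤ Real.exp x ^ n := by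
      apply pow_le_pow_left₀ (by linarith)
      linarith [Real.add_one_le_exp x]
  _ = Real.exp ((n:ℝ)*x) := by rw [← Real.exp_nat_mul]
  _ ≤ Real.exp (1/2) := Real.exp_le_exp.mpr hnx
  _ ≤ 2 := exp_half_lt_two.le

lemma pow_sub_one_abs {z : ℂ} {m : ℕ} (h : ∀ i, i < m → Complex.abs z ^ i ≤ 2) :
    Complex.abs (z ^ m - 1) ≤ 2 * m * Complex.abs (z - 1) := by
  have hg := geom_sum_mul z m
  calc Complex.abs (z^m - 1) = Complex.abs ((∑ i ∈ Finset.range m, z^i) * (z-1)) := by rw [hg]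
  _ = Complex.abs (∑ i ∈ Finset.range m, z^i) * Complex.abs (z-1) := map_mul _ _ _
  _ ≤ (2*m) * Complex.abs (z-1) := by
      apply mul_le_mul_of_nonneg_right _ (AbsoluteValue.nonneg _ _)
      calc Complex.abs (∑ i ∈ Finset.range m, z^i)
          ≤ ∑ i ∈ Finset.range m, Complex.abs (z^i) := by
            exact AbsoluteValue.sum_le _ _ _
      _ ≤ ∑ _i ∈ Finset.range m, (2:ℝ) := by
            apply Finset.sum_le_sum
            intro i hi
            rw [map_pow]
            exact h i (Finset.mem_range.mp hi)
      _ = 2*m := by simp [mul_comm]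

set_option maxHeartbeats 8000000 in
/-- For all sufficiently large `n`, the eigenvalue equation
`λ^n - (w/2) λ^(n-1) - (w⁻¹/2) λ = 0` of the Rudvalis shuffle (`p = 1/2`),
with `w = exp(2πi/n)`, has a root `λ` with `|λ - (1 - 4π²/n³)| ≤ C/n⁴`
for an absolute constant `C`. -/
theorem rudvalis_stmt_8 :
    ∃ C : ℝ, 0 < C ∧ ∃ N : ℕ, ∀ n : ℕ, N ≤ n →
      ∃ lam : ℂ,
        lam ^ n - (Complex.exp (2 * π * Complex.I / n) / 2) * lam ^ (n - 1)
          - ((Complex.exp (2 * π * Complex.I / n))⁻¹ / 2) * lam = 0 ∧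
        ‖lam - (1 - 4 * π ^ 2 / n ^ 3)‖ ≤ C / n ^ 4 := by
  refine ⟨1000, by norm_num, 1000000, fun n hn => ?_⟩
  have hn0 : 0 < n := by omega
  have hn1 : 1 ≤ n := hn0
  have hnR : (1000000 : ℝ) ≤ (n:ℝ) := by exact_mod_cast hn
  have hnpos : (0:ℝ) < (n:ℝ) := by positivity
  have hπ : (3.14159 : ℝ) < π := by
    have := Real.pi_gt_d6; linarith
  have hπ' : π < 3.1416 := by
    have := Real.pi_lt_d2; linarith [Real.pi_lt_d6]
  set θ : ℝ := 2*π/(n:ℝ) with hθdef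
  set ε : ℝ := 4*π^2/(n:ℝ)^3 with hεdef
  have hθpos : 0 < θ := by positivity
  have hθ4 : θ ≤ 1/4 := by
    rw [hθdef, div_le_iff₀ hnpos]; nlinarith
  have hθ1 : θ ≤ 1 := by linarith
  have hεpos : 0 < ε := by positivity
  have hn2 : (1000000:ℝ)^2 ≤ (n:ℝ)^2 := by nlinarith
  have hn3 : (1000000:ℝ)^3 ≤ (n:ℝ)^3 := by nlinarith
  have hn4 : (1000000:ℝ)^4 ≤ (n:ℝ)^4 := by nlinarith
  have hε1 : ε ≤ 1 := by
    rw [hεdef, div_le_one (by positivity)]; nlinarith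
  have hnε : (n:ℝ) * ε = θ^2 := by
    rw [hεdef, hθdef]; field_simp; ring
  set w : ℂ := Complex.exp (2 * ↑π * Complex.I / ↑n) with hwdef
  set aR : ℝ := 1 - ε with haRdef
  set a : ℂ := (aR : ℂ) with hadef
  set F : ℂ → ℂ := fun z => z^n - (w/2)*z^(n-1) - (w⁻¹/2)*z with hFdef
  -- trig facts
  have hθI : 2 * (π:ℂ) * Complex.I / (n:ℂ) = (θ:ℂ) * Complex.I := by
    rw [hθdef]; push_cast; field_simp
  have hw : w = (Real.cos θ : ℂ) + (Real.sin θ : ℂ) * Complex.I := by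
    rw [hwdef, hθI, Complex.exp_mul_I, Complex.ofReal_cos, Complex.ofReal_sin]
  have hwinv : w⁻¹ = (Real.cos θ : ℂ) - (Real.sin θ : ℂ) * Complex.I := by
    rw [hwdef, ← Complex.exp_neg, hθI,
      show -((θ:ℂ) * Complex.I) = (-(θ:ℂ)) * Complex.I by ring,
      Complex.exp_mul_I, Complex.cos_neg, Complex.sin_neg,
      ← Complex.ofReal_cos, ← Complex.ofReal_sin]
    ring
  have habsw : Complex.abs w = 1 := by
    rw [hwdef, hθI, Complex.abs_exp]
    simp
  -- bound on |F a|
  have haR0 : 0 ≤ aR := by rw [haRdef]; linarith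
  have haR1 : aR ≤ 1 := by rw [haRdef]; linarith
  have hAk : ∀ m : ℕ, m ≤ n → |aR^m - (1 - (m:ℝ)*ε)| ≤ θ^4/2 := by
    intro m hm
    have h1 := aux_pow_le hεpos.le hε1 m
    have h2 := aux_le_pow (by linarith : ε ≤ 2) m
    have hmn : (m:ℝ)*ε ≤ (n:ℝ)*ε := by
      apply mul_le_mul_of_nonneg_right _ hεpos.le
      exact_mod_cast hm
    have h3 : ((m:ℝ)*ε)^2/2 ≤ θ^4/2 := by
      have hmε : 0 ≤ (m:ℝ)*ε := by positivity
      nlinarith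
    rw [haRdef, abs_le]
    constructor <;> nlinarith
  have hImb : |(Real.sin θ/2)*(aR^(n-1) - aR)| ≤ θ^3/2 := by
    have hθπ : θ ≤ π := by
      rw [hθdef, div_le_iff₀ hnpos]
      nlinarith [Real.pi_pos]
    have hsin1 : Real.sin θ ≤ θ := Real.sin_le hθpos.le
    have hsin0 : 0 ≤ Real.sin θ := Real.sin_nonneg_of_nonneg_of_le_pi hθpos.le hθπ
    have hd1 : aR^(n-1) ≤ aR := by
      have := pow_le_pow_of_le_one haR0 haR1 (show 1 ≤ n-1 by omega)
      rwa [pow_one] at this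
    have hd2 : aR - θ^2 ≤ aR^(n-1) := by
      have h2 := aux_le_pow (by linarith : ε ≤ 2) (n-1)
      have hc : ((n-1:ℕ):ℝ) = (n:ℝ) - 1 := by
        push_cast [hn1]; ring
      rw [hc] at h2
      rw [haRdef]
      nlinarith
    rw [abs_mul]
    have e1 : |Real.sin θ/2| ≤ θ/2 := by
      rw [abs_of_nonneg (by linarith)]; linarith
    have e2 : |aR^(n-1) - aR| ≤ θ^2 := by
      rw [abs_le]; constructor <;> nlinarith
    calc |Real.sin θ/2| * |aR^(n-1) - aR| ≤ (θ/2) * θ^2 := by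
          apply mul_le_mul e1 e2 (abs_nonneg _) (by positivity)
    _ = θ^3/2 := by ring
  have hReb : |aR^n - Real.cos θ/2*(aR^(n-1)+aR)| ≤ 2*θ^4 := by
    have hr1 := hAk n le_rfl
    have hr2' := hAk (n-1) (by omega)
    have hc : ((n-1:ℕ):ℝ) = (n:ℝ) - 1 := by push_cast [hn1]; ring
    rw [hc] at hr2'
    have hr3 : |Real.cos θ - (1 - θ^2/2)| ≤ θ^4*(5/96) := by
      have := Real.cos_bound (x := θ) (by rw [abs_of_pos hθpos]; exact hθ1)
      rwa [abs_of_pos hθpos] at this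
    have hθ2 : θ^2 ≤ 1 := by nlinarith
    have hθ4' : θ^4 ≤ 1 := by nlinarith
    have hid : aR^n - Real.cos θ/2*(aR^(n-1)+aR) =
        (aR^n - (1 - (n:ℝ)*ε)) - θ^4/4
        - (1-θ^2/2)*(aR^(n-1) - (1 - ((n:ℝ)-1)*ε))/2
        - (Real.cos θ - (1 - θ^2/2))*(2-θ^2+(aR^(n-1) - (1 - ((n:ℝ)-1)*ε)))/2 := by
      rw [haRdef]
      linear_combination (Real.cos θ/2 - 1) * hnε
    have e2 : |(1-θ^2/2)*(aR^(n-1) - (1 - ((n:ℝ)-1)*ε))| ≤ θ^4/2 := by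
      rw [abs_mul]
      have e21 : |1-θ^2/2| ≤ 1 := by rw [abs_le]; constructor <;> nlinarith
      calc |1-θ^2/2| * |aR^(n-1) - (1 - ((n:ℝ)-1)*ε)| ≤ 1 * (θ^4/2) := by
            apply mul_le_mul e21 hr2' (abs_nonneg _) (by norm_num)
      _ = θ^4/2 := by ring
    have e3 : |2-θ^2+(aR^(n-1) - (1 - ((n:ℝ)-1)*ε))| ≤ 4 := by
      have := abs_le.mp hr2'
      rw [abs_le]; constructor <;> nlinarith
    have e4 : |(Real.cos θ - (1 - θ^2/2))*(2-θ^2+(aR^(n-1) - (1 - ((n:ℝ)-1)*ε)))| ≤ (θ^4*(5/96))*4 := by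
      rw [abs_mul]
      apply mul_le_mul hr3 e3 (abs_nonneg _) (by positivity)
    have hu1 := abs_le.mp hr1
    have hu2 := abs_le.mp e2
    have hu4 := abs_le.mp e4
    rw [hid, abs_le]
    constructor <;> nlinarith
  have hFeq : F a = ((aR^n - Real.cos θ/2*(aR^(n-1)+aR) : ℝ) : ℂ)
      + ((-(Real.sin θ/2)*(aR^(n-1)-aR) : ℝ) : ℂ) * Complex.I := by
    simp only [hFdef]
    rw [hwinv, hw, hadef]
    push_cast
    ring
  have hFa : Complex.abs (F a) ≤ θ^3 := by
    rw [hFeq]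
    have h1 := Complex.abs.add_le
      ((aR^n - Real.cos θ/2*(aR^(n-1)+aR) : ℝ) : ℂ)
      (((-(Real.sin θ/2)*(aR^(n-1)-aR) : ℝ) : ℂ) * Complex.I)
    have h2 : Complex.abs (((-(Real.sin θ/2)*(aR^(n-1)-aR) : ℝ) : ℂ) * Complex.I)
        = |(Real.sin θ/2)*(aR^(n-1)-aR)| := by
      rw [map_mul, Complex.abs_I, mul_one, Complex.abs_ofReal]
      rw [show -(Real.sin θ/2)*(aR^(n-1)-aR) = -((Real.sin θ/2)*(aR^(n-1)-aR)) by ring, abs_neg]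
    have h3 : Complex.abs ((aR^n - Real.cos θ/2*(aR^(n-1)+aR) : ℝ) : ℂ)
        = |aR^n - Real.cos θ/2*(aR^(n-1)+aR)| := Complex.abs_ofReal _
    rw [h2, h3] at h1
    refine h1.trans ?_
    have h9 : θ^4 ≤ θ^3/4 := by
      have := mul_le_mul_of_nonneg_left hθ4 (pow_nonneg hθpos.le 3)
      nlinarith [this]
    linarith
  -- the contraction
  set δ : ℝ := 1000/(n:ℝ)^4 with hδdef
  have hδpos : 0 < δ := by positivity
  set s : Set ℂ := Metric.closedBall a δ with hsdef
  set T : ℂ → ℂ := fun z => z - (2/(n:ℂ)) * F z with hTdef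
  set G' : ℂ → ℂ := fun z => (n:ℂ)*z^(n-1) - (w/2)*(((n-1:ℕ):ℂ)*z^(n-2)) - w⁻¹/2 with hG'def
  have hnez : (n:ℂ) ≠ 0 := by exact_mod_cast hn0.ne'
  have hderiv : ∀ z : ℂ, HasDerivAt F (G' z) z := by
    intro z
    have h1 := hasDerivAt_pow n z
    have h2 := HasDerivAt.const_mul (w/2) (hasDerivAt_pow (n-1) z)
    have h3 := HasDerivAt.const_mul (w⁻¹/2) (hasDerivAt_id z)
    have h4 := (h1.sub h2).sub h3
    have h5 : (n:ℂ)*z^(n-1) - (w/2)*(((n-1:ℕ):ℂ)*z^(n-1-1)) - (w⁻¹/2)*1 = G' z := by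
      rw [hG'def, show n-1-1 = n-2 from by omega]
      push_cast
      ring
    rw [hFdef, ← h5]
    exact h4
  have hT' : ∀ z : ℂ, HasDerivAt T (1 - (2/(n:ℂ)) * G' z) z := by
    intro z
    exact (hasDerivAt_id z).sub ((hderiv z).const_mul (2/(n:ℂ)))
  have hbound : ∀ z ∈ s, ‖1 - (2/(n:ℂ)) * G' z‖ ≤ 1/2 := by
    intro z hz
    rw [hsdef, Metric.mem_closedBall, Complex.dist_eq] at hz
    have hza : Complex.abs (z - a) ≤ δ := hz
    have ha1 : Complex.abs (a - 1) = ε := by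
      have h1 : a - 1 = ((-ε : ℝ) : ℂ) := by rw [hadef, haRdef]; push_cast; ring
      rw [h1, Complex.abs_ofReal, abs_neg, abs_of_pos hεpos]
    have hz1 : Complex.abs (z - 1) ≤ 41/(n:ℝ)^3 := by
      have e1 : (1000:ℝ)/(n:ℝ)^4 ≤ 1/(n:ℝ)^3 := by
        rw [div_le_div_iff₀ (by positivity) (by positivity)]; nlinarith
      have e2 : ε ≤ 40/(n:ℝ)^3 := by rw [hεdef]; gcongr; nlinarith
      have e3 : (1:ℝ)/(n:ℝ)^3 + 40/(n:ℝ)^3 = 41/(n:ℝ)^3 := by ring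
      calc Complex.abs (z-1) = Complex.abs ((z-a) + (a-1)) := by rw [show z-1 = (z-a)+(a-1) by ring]
      _ ≤ Complex.abs (z-a) + Complex.abs (a-1) := Complex.abs.add_le _ _
      _ ≤ δ + ε := by rw [ha1]; exact add_le_add hza le_rfl
      _ ≤ 41/(n:ℝ)^3 := by rw [hδdef]; linarith
    have hzabs : Complex.abs z ≤ 1 + 41/(n:ℝ)^3 := by
      have h0 := Complex.abs.add_le 1 (z-1)
      rw [show (1:ℂ) + (z-1) = z by ring, map_one] at h0
      linarith
    have hnx : (n:ℝ) * (41/(n:ℝ)^3) ≤ 1/2 := by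
      rw [mul_div_assoc']
      rw [div_le_div_iff₀ (by positivity) (by norm_num)]
      nlinarith
    have hpow2 : ∀ i, i ≤ n → Complex.abs z ^ i ≤ 2 := fun i hi =>
      pow_le_two_aux (AbsoluteValue.nonneg _ _) hzabs (by positivity) hnx hi
    have hgeom : ∀ m, m ≤ n → Complex.abs (z^m - 1) ≤ 2*m*(41/(n:ℝ)^3) := by
      intro m hm
      refine (pow_sub_one_abs (fun i hi => hpow2 i (le_trans hi.le hm))).trans ?_
      exact mul_le_mul_of_nonneg_left hz1 (by positivity)
    have hw1 : Complex.abs (w - 1) ≤ 2*θ := by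
      have h1 : Complex.abs ((θ:ℂ) * Complex.I) = θ := by
        rw [map_mul, Complex.abs_I, Complex.abs_ofReal, abs_of_pos hθpos, mul_one]
      have h2 := Complex.abs_exp_sub_one_le (x := (θ:ℂ) * Complex.I) (by rw [h1]; exact hθ1)
      rw [h1] at h2
      rw [hwdef, hθI]
      exact h2
    have hrw : 1 - (2/(n:ℂ)) * G' z =
        (1 - 2*z^(n-1) + z^(n-2)) + (w*(((n:ℂ)-1)/(n:ℂ)) - 1)*z^(n-2) + w⁻¹*(1/(n:ℂ)) := by
      rw [hG'def]
      rw [show ((n-1:ℕ):ℂ) = (n:ℂ)-1 from by push_cast [hn1]; ring]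
      have hc : (n:ℂ) * ((n:ℂ))⁻¹ = 1 := mul_inv_cancel₀ hnez
      linear_combination (-2*z^(n-1)) * hc
    have b1 : Complex.abs (1 - 2*z^(n-1) + z^(n-2)) ≤ 246/(n:ℝ)^2 := by
      have e1 := hgeom (n-1) (by omega)
      have e2 := hgeom (n-2) (by omega)
      have hc1 : ((n-1:ℕ):ℝ) ≤ (n:ℝ) := by exact_mod_cast Nat.sub_le n 1
      have hc2 : ((n-2:ℕ):ℝ) ≤ (n:ℝ) := by exact_mod_cast Nat.sub_le n 2
      calc Complex.abs (1 - 2*z^(n-1) + z^(n-2))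
          = Complex.abs (-(2*(z^(n-1) - 1)) + (z^(n-2) - 1)) := by
            rw [show (1:ℂ) - 2*z^(n-1) + z^(n-2) = -(2*(z^(n-1) - 1)) + (z^(n-2) - 1) by ring]
      _ ≤ Complex.abs (-(2*(z^(n-1) - 1))) + Complex.abs (z^(n-2) - 1) := Complex.abs.add_le _ _
      _ = 2 * Complex.abs (z^(n-1) - 1) + Complex.abs (z^(n-2) - 1) := by
          rw [map_neg_eq_map, map_mul, Complex.abs_two]
      _ ≤ 2 * (2*(n:ℝ)*(41/(n:ℝ)^3)) + 2*(n:ℝ)*(41/(n:ℝ)^3) := by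
          have e1' : Complex.abs (z^(n-1) - 1) ≤ 2*(n:ℝ)*(41/(n:ℝ)^3) := by
            refine e1.trans ?_; gcongr
          have e2' : Complex.abs (z^(n-2) - 1) ≤ 2*(n:ℝ)*(41/(n:ℝ)^3) := by
            refine e2.trans ?_; gcongr
          linarith
      _ = 246/(n:ℝ)^2 := by field_simp; ring
    have b2 : Complex.abs ((w*(((n:ℂ)-1)/(n:ℂ)) - 1)*z^(n-2)) ≤ (2*θ + 1/(n:ℝ))*2 := by
      rw [map_mul]
      have e1 : Complex.abs (w*(((n:ℂ)-1)/(n:ℂ)) - 1) ≤ 2*θ + 1/(n:ℝ) := by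
        have h1 : w*(((n:ℂ)-1)/(n:ℂ)) - 1 = (w - 1) - w*(1/(n:ℂ)) := by
          field_simp; ring
        rw [h1]
        have hs := Complex.abs.add_le (w-1) (-(w*(1/(n:ℂ))))
        rw [show (w-1) + -(w*(1/(n:ℂ))) = (w-1) - w*(1/(n:ℂ)) by ring, map_neg_eq_map] at hs
        have hs2 : Complex.abs (w*(1/(n:ℂ))) = 1/(n:ℝ) := by
          rw [map_mul, habsw, one_mul, map_div₀, map_one, Complex.abs_natCast]
        rw [hs2] at hs
        linarith
      have e2 : Complex.abs (z^(n-2)) ≤ 2 := by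
        rw [map_pow]; exact hpow2 (n-2) (by omega)
      exact mul_le_mul e1 e2 (AbsoluteValue.nonneg _ _) (by positivity)
    have b3 : Complex.abs (w⁻¹*(1/(n:ℂ))) ≤ 1/(n:ℝ) := by
      rw [map_mul, map_inv₀, habsw, inv_one, one_mul, map_div₀, map_one, Complex.abs_natCast]
    rw [Complex.norm_eq_abs, hrw]
    have hθn : θ ≤ 7/(n:ℝ) := by rw [hθdef]; gcongr; nlinarith
    have hadd1 := Complex.abs.add_le
      ((1 - 2*z^(n-1) + z^(n-2)) + (w*(((n:ℂ)-1)/(n:ℂ)) - 1)*z^(n-2)) (w⁻¹*(1/(n:ℂ)))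
    have hadd2 := Complex.abs.add_le
      (1 - 2*z^(n-1) + z^(n-2)) ((w*(((n:ℂ)-1)/(n:ℂ)) - 1)*z^(n-2))
    have h1 : (246:ℝ)/(n:ℝ)^2 ≤ 1/6 := by
      rw [div_le_div_iff₀ (by positivity) (by norm_num)]; nlinarith
    have hinv : (1:ℝ)/(n:ℝ) ≤ 1/1000000 := by
      rw [div_le_div_iff₀ (by positivity) (by norm_num)]; linarith
    have h2 : (2*θ + 1/(n:ℝ))*2 ≤ 1/6 := by
      have e7 : θ ≤ 7*(1/(n:ℝ)) := by rw [mul_one_div]; exact hθn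
      nlinarith [e7, hinv]
    have h3 : (1:ℝ)/(n:ℝ) ≤ 1/6 := by linarith
    linarith
  have hlip : LipschitzOnWith (2⁻¹ : NNReal) T s := by
    apply Convex.lipschitzOnWith_of_nnnorm_hasDerivWithin_le (convex_closedBall a δ)
      (fun z _ => (hT' z).hasDerivWithinAt)
    intro z hz
    rw [← NNReal.coe_le_coe]
    push_cast
    simpa using hbound z hz
  have hTa : dist (T a) a ≤ 497/(n:ℝ)^4 := by
    have h1 : T a - a = -((2/(n:ℂ)) * F a) := by rw [hTdef]; ring
    rw [dist_eq_norm, h1, norm_neg]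
    have h2 : ‖(2/(n:ℂ)) * F a‖ = (2/(n:ℝ)) * Complex.abs (F a) := by
      rw [norm_mul]
      congr 1
      simp [Complex.norm_eq_abs, map_div₀]
    rw [h2]
    have h3 : (2/(n:ℝ)) * Complex.abs (F a) ≤ (2/(n:ℝ)) * θ^3 :=
      mul_le_mul_of_nonneg_left hFa (by positivity)
    refine h3.trans ?_
    have h4 : (2/(n:ℝ))*θ^3 = 16*π^3/(n:ℝ)^4 := by
      rw [hθdef]; field_simp; ring
    rw [h4, div_le_div_iff₀ (by positivity) (by positivity)]
    have hp2 : π^2 ≤ 9.8697 := by nlinarith [hπ', Real.pi_pos]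
    have hp3 : π^3 ≤ 31.01 := by nlinarith [hp2, hπ', Real.pi_pos]
    have hp4 := mul_le_mul_of_nonneg_right hp3 (pow_pos hnpos 4).le
    nlinarith [hp4]
  have hmaps : Set.MapsTo T s s := by
    intro z hz
    rw [hsdef, Metric.mem_closedBall] at hz ⊢
    have h1 : dist (T z) (T a) ≤ (2⁻¹ : NNReal) * dist z a :=
      hlip.dist_le_mul z hz a (Metric.mem_closedBall_self hδpos.le)
    have h1' : dist (T z) (T a) ≤ (1/2) * dist z a := by
      have h2 : ((2⁻¹ : NNReal) : ℝ) = 1/2 := by norm_num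
      linarith [h2 ▸ h1]
    have hda : (0:ℝ) ≤ dist z a := dist_nonneg
    calc dist (T z) a ≤ dist (T z) (T a) + dist (T a) a := dist_triangle _ _ _
    _ ≤ (1/2) * δ + 497/(n:ℝ)^4 := by
        refine add_le_add (h1'.trans ?_) hTa
        linarith
    _ = 997/(n:ℝ)^4 := by rw [hδdef]; ring
    _ ≤ δ := by rw [hδdef]; gcongr <;> norm_num
  have hcontr : ContractingWith (2⁻¹ : NNReal) (hmaps.restrict T s s) :=
    ⟨by rw [← NNReal.coe_lt_coe]; norm_num, hlip.mapsToRestrict hmaps⟩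
  obtain ⟨y, hys, hfix, -, -⟩ := ContractingWith.exists_fixedPoint'
    (Metric.isClosed_closedBall.isComplete) hmaps hcontr (Metric.mem_closedBall_self hδpos.le)
    (edist_ne_top _ _)
  have hFy : F y = 0 := by
    have h1 : y - (2/(n:ℂ)) * F y = y := hfix
    have h2 : (2/(n:ℂ)) ≠ 0 := by
      apply div_ne_zero two_ne_zero
      exact_mod_cast hn0.ne'
    have h3 : (2/(n:ℂ)) * F y = 0 := by linear_combination (-1 : ℂ) * h1
    exact (mul_eq_zero.mp h3).resolve_left h2
  refine ⟨y, ?_, ?_⟩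
  · simpa [hFdef, hwdef] using hFy
  · have h1 : (1 - 4 * (π:ℂ) ^ 2 / (n:ℂ) ^ 3) = a := by
      rw [hadef, haRdef, hεdef]; push_cast; ring
    rw [h1]
    have h2 : dist y a ≤ δ := Metric.mem_closedBall.mp hys
    rw [Complex.dist_eq] at h2
    simpa [hδdef] using h2
end

section
/- For each sufficiently large n, the function g(θ) = (1/2 + cos(2π/n))·sin(θ(n−1)) − (1/2)·sin(θ(n+1)) − sin(θn) + (1 + cos(2π/n))·sin(θ) has a root θ_n in the interval ((1−ε)·√2·π·n^{−3/2}, (1+ε)·√2·π·n^{−3/2}) for any fixed ε > 0. -/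
set_option maxHeartbeats 1000000


open Real

/-- Quartic upper bound for cosine on `(0, 2]`. -/
lemma cos_le_quartic {y : ℝ} (h0 : 0 < y) (h2 : y ≤ 2) :
    Real.cos y ≤ 1 - y ^ 2 / 2 + y ^ 4 / 16 := by
  have hy : y = 2 * (y / 2) := by ring
  have hs : y / 2 - (y / 2) ^ 3 / 4 < Real.sin (y / 2) := by
    have := Real.sin_gt_sub_cube (x := y / 2) (by linarith)
    linarith [pow_pos (show (0:ℝ) < y / 2 by linarith) 3]
  have hy2 : y ^ 2 ≤ 4 := by nlinarith
  have hnn : 0 ≤ y / 2 - (y / 2) ^ 3 / 4 := by nlinarith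
  have hcos : Real.cos y = 1 - 2 * Real.sin (y / 2) ^ 2 := by
    rw [hy, Real.cos_two_mul', Real.cos_sq']; ring
  have hL2 : (y / 2 - (y / 2) ^ 3 / 4) ^ 2 ≤ Real.sin (y / 2) ^ 2 :=
    pow_le_pow_left₀ hnn hs.le 2
  nlinarith [hL2, sq_nonneg (y ^ 3)]


lemma aux_pow4 {x : ℝ} (h0 : 0 ≤ x) (h1 : x ≤ 1) : x ^ 4 ≤ x ^ 2 := by
  nlinarith [mul_nonneg (mul_nonneg h0 h0) (mul_nonneg h0 (sub_nonneg.2 h1)),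
    mul_nonneg (mul_nonneg h0 h0) (sub_nonneg.2 h1)]

lemma aux_pow3 {x : ℝ} (h0 : 0 ≤ x) (h1 : x ≤ 1) : x ^ 3 ≤ x := by
  nlinarith [mul_nonneg (mul_nonneg h0 h0) (sub_nonneg.2 h1),
    mul_nonneg h0 (sub_nonneg.2 h1)]

lemma br_pos (K u E P : ℝ) (hP : 9 ≤ P) (hP' : P ≤ 10) (hE : 0 < E) (hE2 : E ≤ 1/2)
    (hK : 2*P + 36*E ≤ K) (hK49 : K ≤ 49) (hu : 0 < u) (hue : u ≤ E/500) :
    2*P + K*u/2 < (2 - 2*P*u^2)*(K/2 - K^2*u/16)*(1 - K*u^3/4) := by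
  have hu1 : u ≤ 1/1000 := by linarith
  have hK0 : 0 < K := by linarith
  have hKu : K*u ≤ 49*u := by nlinarith
  have h1a : (0:ℝ) ≤ 2 - u := by linarith
  have h1b : 2 - u ≤ 2 - 2*P*u^2 := by nlinarith [mul_pos hu hu]
  have h2a : (0:ℝ) ≤ K/2 - 4*K*u := by nlinarith [mul_pos hK0 hu]
  have h2b : K/2 - 4*K*u ≤ K/2 - K^2*u/16 := by nlinarith [mul_pos hK0 hu]
  have h3a : (0:ℝ) ≤ 1 - u := by linarith
  have h3b : 1 - u ≤ 1 - K*u^3/4 := by nlinarith [mul_nonneg hK0.le (mul_pos hu hu).le]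
  have m1 : (2 - u)*(K/2 - 4*K*u) ≤ (2 - 2*P*u^2)*(K/2 - K^2*u/16) :=
    mul_le_mul h1b h2b h2a (by linarith)
  have m2 : (2 - u)*(K/2 - 4*K*u)*(1 - u) ≤ (2 - 2*P*u^2)*(K/2 - K^2*u/16)*(1 - K*u^3/4) :=
    mul_le_mul m1 h3b h3a (le_trans (mul_nonneg h1a h2a) m1)
  have hfin : 2*P + K*u/2 < (2 - u)*(K/2 - 4*K*u)*(1 - u) := by
    nlinarith [mul_pos hK0 hu, mul_nonneg hK0.le (mul_pos hu hu).le,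
      mul_nonneg (mul_nonneg hK0.le (mul_pos hu hu).le) hu.le,
      mul_nonneg (sub_nonneg.2 hKu) hu.le, mul_nonneg (sub_nonneg.2 hKu) (mul_pos hu hu).le]
  linarith

lemma br_neg (K u E P : ℝ) (hP : 9 ≤ P) (hP' : P ≤ 10) (hE : 0 < E) (hE2 : E ≤ 1/2)
    (hK : K ≤ 2*P - 18*E) (hK0 : 0 < K) (hK49 : K ≤ 49) (hu : 0 < u) (hue : u ≤ E/500) :
    K < (2*P - P^2*u^2)*(1 - K*u/4) := by
  have hu1 : u ≤ 1/1000 := by linarith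
  have h1 : 2*P - u/10 ≤ 2*P - P^2*u^2 := by
    nlinarith [mul_nonneg (mul_nonneg (sub_nonneg.2 hP') (by linarith : (0:ℝ) ≤ 10 + P))
      (mul_pos hu hu).le, mul_nonneg hu.le (sub_nonneg.2 hu1)]
  have h2 : 1 - 13*u ≤ 1 - K*u/4 := by nlinarith [mul_pos hK0 hu]
  have h1p : (0:ℝ) < 2*P - u/10 := by linarith
  have h2p : (0:ℝ) < 1 - 13*u := by linarith
  have m := mul_le_mul h1 h2 h2p.le (by linarith)
  have hfin : K < (2*P - u/10)*(1 - 13*u) := by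
    nlinarith [mul_pos hu hu, mul_nonneg hu.le (sub_nonneg.2 hP')]
  linarith

/-- trig identity reshaping `g`. -/
lemma g_eq (c θ x : ℝ) :
    (1 / 2 + c) * Real.sin (x - θ) - (1 / 2) * Real.sin (x + θ) - Real.sin x
      + (1 + c) * Real.sin θ
      = (1 + c) * (1 - Real.cos x) * Real.sin θ - (1 - c * Real.cos θ) * Real.sin x := by
  rw [Real.sin_add, Real.sin_sub]; ring

lemma arith_pos (p k q e : ℝ) (hp3 : 3 < p) (hp4 : p < 3.15)
    (he : 0 < e) (he2 : e ≤ 1 / 2) (hk2 : k ^ 2 = (1 + e) ^ 2 * (2 * p ^ 2))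
    (hk0 : 0 < k) (hk7 : k ≤ 7) (hq : 0 < q) (hq2 : q ^ 2 ≤ e / 500) :
    (2 * p ^ 2 * q ^ 4 + (k * q ^ 3) ^ 2 / 2) * (k * q)
      < (2 - 2 * p ^ 2 * q ^ 4) * ((k * q) ^ 2 / 2 - (k * q) ^ 4 / 16)
          * ((k * q ^ 3) - (k * q ^ 3) ^ 3 / 4) := by
  have hbr : 2 * p ^ 2 + k ^ 2 * q ^ 2 / 2
      < (2 - 2 * p ^ 2 * (q ^ 2) ^ 2) * (k ^ 2 / 2 - (k ^ 2) ^ 2 * q ^ 2 / 16)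
          * (1 - k ^ 2 * (q ^ 2) ^ 3 / 4) := by
    apply br_pos (k ^ 2) (q ^ 2) e (p ^ 2) (by nlinarith) (by nlinarith) he he2
      (by nlinarith [mul_nonneg he.le (show (0:ℝ) ≤ p ^ 2 - 9 by nlinarith),
        mul_nonneg (mul_nonneg he.le he.le) (sq_nonneg p)])
      (by nlinarith) (by positivity) hq2
  have hq5 : 0 < k * q ^ 5 := by positivity
  calc (2 * p ^ 2 * q ^ 4 + (k * q ^ 3) ^ 2 / 2) * (k * q)
      = (k * q ^ 5) * (2 * p ^ 2 + k ^ 2 * q ^ 2 / 2) := by ring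
    _ < (k * q ^ 5) * ((2 - 2 * p ^ 2 * (q ^ 2) ^ 2) * (k ^ 2 / 2 - (k ^ 2) ^ 2 * q ^ 2 / 16)
          * (1 - k ^ 2 * (q ^ 2) ^ 3 / 4)) := (mul_lt_mul_iff_right₀ hq5).mpr hbr
    _ = (2 - 2 * p ^ 2 * q ^ 4) * ((k * q) ^ 2 / 2 - (k * q) ^ 4 / 16)
          * ((k * q ^ 3) - (k * q ^ 3) ^ 3 / 4) := by ring

lemma arith_neg (p k q e : ℝ) (hp3 : 3 < p) (hp4 : p < 3.15)
    (he : 0 < e) (he2 : e ≤ 1 / 2) (hk2 : k ^ 2 = (1 - e) ^ 2 * (2 * p ^ 2))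
    (hk0 : 0 < k) (hk7 : k ≤ 7) (hq : 0 < q) (hq2 : q ^ 2 ≤ e / 500) :
    2 * ((k * q) ^ 2 / 2) * (k * q ^ 3)
      < (2 * p ^ 2 * q ^ 4 - p ^ 4 * q ^ 8) * ((k * q) - (k * q) ^ 3 / 4) := by
  have hbr : k ^ 2 < (2 * p ^ 2 - (p ^ 2) ^ 2 * (q ^ 2) ^ 2) * (1 - k ^ 2 * q ^ 2 / 4) := by
    apply br_neg (k ^ 2) (q ^ 2) e (p ^ 2) (by nlinarith) (by nlinarith) he he2
      (by nlinarith [mul_nonneg he.le (show (0:ℝ) ≤ (2 - e) * (2 * p ^ 2) - 18 by nlinarith)])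
      (by positivity) (by nlinarith) (by positivity) hq2
  have hq5 : 0 < k * q ^ 5 := by positivity
  calc 2 * ((k * q) ^ 2 / 2) * (k * q ^ 3)
      = (k * q ^ 5) * (k ^ 2) := by ring
    _ < (k * q ^ 5) * ((2 * p ^ 2 - (p ^ 2) ^ 2 * (q ^ 2) ^ 2) * (1 - k ^ 2 * q ^ 2 / 4)) :=
        (mul_lt_mul_iff_right₀ hq5).mpr hbr
    _ = (2 * p ^ 2 * q ^ 4 - p ^ 4 * q ^ 8) * ((k * q) - (k * q) ^ 3 / 4) := by ring

/-- Sign of the reshaped function at the right endpoint. -/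
lemma rud_sign_pos (e q k : ℝ) (he : 0 < e) (he2 : e ≤ 1 / 2) (hq : 0 < q)
    (hq2 : q ^ 2 ≤ e / 500) (hkdef : k = (1 + e) * Real.sqrt 2 * π) :
    0 < (1 + Real.cos (2 * π * q ^ 2))
          * (1 - Real.cos (k * q))
          * Real.sin (k * q ^ 3)
        - (1 - Real.cos (2 * π * q ^ 2)
              * Real.cos (k * q ^ 3))
          * Real.sin (k * q) := by
  have hs2 : Real.sqrt 2 ^ 2 = 2 := Real.sq_sqrt (by norm_num)
  have hs2pos : (0:ℝ) < Real.sqrt 2 := Real.sqrt_pos.mpr (by norm_num)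
  have hp3 := Real.pi_gt_three
  have hp4 := Real.pi_lt_d2
  have hk2 : k ^ 2 = (1 + e) ^ 2 * (2 * π ^ 2) := by
    rw [hkdef]; rw [mul_pow, mul_pow, hs2]; ring
  have hk0 : 0 < k := by rw [hkdef]; have := Real.pi_pos; positivity
  have hs15 : Real.sqrt 2 ≤ 1.42 := by nlinarith [hs2, hs2pos.le]
  have hk7 : k ≤ 7 := by
    have h1 : (1 + e) * Real.sqrt 2 ≤ 1.5 * 1.42 :=
      mul_le_mul (by linarith) hs15 hs2pos.le (by norm_num)
    rw [hkdef]
    nlinarith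
  have hq31 : q ≤ 1 / 31 := by nlinarith
  have hq21 : q ^ 2 ≤ 1 / 961 := by nlinarith
  have hq4 : q ^ 4 ≤ q ^ 2 := by nlinarith [mul_pos hq hq]
  have hpq4 : 2 * π ^ 2 * q ^ 4 ≤ 1 := by nlinarith [mul_pos hq hq]
  have hx0 : 0 < k * q := by positivity
  have hx1 : k * q ≤ 1 := by nlinarith
  have hθ0 : 0 < k * q ^ 3 := by positivity
  have hθx : k * q ^ 3 ≤ k * q := by nlinarith
  have hθ1 : k * q ^ 3 ≤ 1 := le_trans hθx hx1
  have hy0 : 0 < 2 * π * q ^ 2 := by positivity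
  have hy2 : 2 * π * q ^ 2 ≤ 2 := by nlinarith
  -- bounds
  have hc_lo : 1 - 2 * π ^ 2 * q ^ 4 ≤ Real.cos (2 * π * q ^ 2) := by
    have := Real.one_sub_sq_div_two_le_cos (x := 2 * π * q ^ 2)
    nlinarith [this]
  have hcx_hi : Real.cos (k * q) ≤ 1 - (k * q) ^ 2 / 2 + (k * q) ^ 4 / 16 :=
    cos_le_quartic hx0 (by linarith)
  have hsθ_lo : k * q ^ 3 - (k * q ^ 3) ^ 3 / 4 ≤ Real.sin (k * q ^ 3) :=
    (by have := Real.sin_gt_sub_cube hθ0; linarith [pow_pos hθ0 3])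
  have hsx_hi : Real.sin (k * q) ≤ k * q := (Real.sin_lt hx0).le
  have hcθ_lo : 1 - (k * q ^ 3) ^ 2 / 2 ≤ Real.cos (k * q ^ 3) :=
    Real.one_sub_sq_div_two_le_cos
  -- A lower bound
  have hf1 : 2 - 2 * π ^ 2 * q ^ 4 ≤ 1 + Real.cos (2 * π * q ^ 2) := by
    linarith only [hc_lo]
  have hf2 : (k * q) ^ 2 / 2 - (k * q) ^ 4 / 16 ≤ 1 - Real.cos (k * q) := by
    linarith only [hcx_hi]
  have hf2n : (0:ℝ) ≤ (k * q) ^ 2 / 2 - (k * q) ^ 4 / 16 := by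
    linarith only [aux_pow4 hx0.le hx1, sq_nonneg (k * q)]
  have hf3n : (0:ℝ) ≤ k * q ^ 3 - (k * q ^ 3) ^ 3 / 4 := by
    linarith only [aux_pow3 hθ0.le hθ1, hθ0]
  have hA : (2 - 2 * π ^ 2 * q ^ 4) * ((k * q) ^ 2 / 2 - (k * q) ^ 4 / 16)
        * (k * q ^ 3 - (k * q ^ 3) ^ 3 / 4)
      ≤ (1 + Real.cos (2 * π * q ^ 2)) * (1 - Real.cos (k * q))
          * Real.sin (k * q ^ 3) := by
    have h12 : (2 - 2 * π ^ 2 * q ^ 4) * ((k * q) ^ 2 / 2 - (k * q) ^ 4 / 16)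
        ≤ (1 + Real.cos (2 * π * q ^ 2)) * (1 - Real.cos (k * q)) :=
      mul_le_mul hf1 hf2 hf2n (by linarith)
    refine mul_le_mul h12 hsθ_lo hf3n ?_
    have c1 := Real.neg_one_le_cos (2 * π * q ^ 2)
    have c2 := Real.cos_le_one (k * q)
    nlinarith
  -- B upper bound
  have hBfac : 1 - Real.cos (2 * π * q ^ 2) * Real.cos (k * q ^ 3)
      ≤ 2 * π ^ 2 * q ^ 4 + (k * q ^ 3) ^ 2 / 2 := by
    have h1 : (0:ℝ) ≤ 1 - 2 * π ^ 2 * q ^ 4 := by nlinarith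
    have h2 : (0:ℝ) ≤ 1 - (k * q ^ 3) ^ 2 / 2 := by nlinarith
    nlinarith [mul_le_mul hc_lo hcθ_lo h2
      (show (0:ℝ) ≤ Real.cos (2 * π * q ^ 2) by linarith),
      mul_nonneg (show (0:ℝ) ≤ 2 * π ^ 2 * q ^ 4 by positivity) (sq_nonneg (k * q ^ 3))]
  have hB : (1 - Real.cos (2 * π * q ^ 2) * Real.cos (k * q ^ 3)) * Real.sin (k * q)
      ≤ (2 * π ^ 2 * q ^ 4 + (k * q ^ 3) ^ 2 / 2) * (k * q) := by
    have hsx0 : 0 ≤ Real.sin (k * q) := Real.sin_nonneg_of_nonneg_of_le_pi hx0.le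
      (by nlinarith)
    refine mul_le_mul hBfac hsx_hi hsx0 (by positivity)
  have key := arith_pos π k q e hp3 hp4 he he2 hk2 hk0 hk7 hq hq2
  linarith [hA, hB, key]

/-- Sign of the reshaped function at the left endpoint. -/
lemma rud_sign_neg (e q k : ℝ) (he : 0 < e) (he2 : e ≤ 1 / 2) (hq : 0 < q)
    (hq2 : q ^ 2 ≤ e / 500) (hkdef : k = (1 - e) * Real.sqrt 2 * π) :
    (1 + Real.cos (2 * π * q ^ 2))
          * (1 - Real.cos (k * q))
          * Real.sin (k * q ^ 3)
        - (1 - Real.cos (2 * π * q ^ 2)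
              * Real.cos (k * q ^ 3))
          * Real.sin (k * q) < 0 := by
  have hs2 : Real.sqrt 2 ^ 2 = 2 := Real.sq_sqrt (by norm_num)
  have hs2pos : (0:ℝ) < Real.sqrt 2 := Real.sqrt_pos.mpr (by norm_num)
  have hs2one : (1:ℝ) ≤ Real.sqrt 2 := by nlinarith
  have hp3 := Real.pi_gt_three
  have hp4 := Real.pi_lt_d2
  have hk2 : k ^ 2 = (1 - e) ^ 2 * (2 * π ^ 2) := by
    rw [hkdef]; rw [mul_pow, mul_pow, hs2]; ring
  have hk0 : 0 < k := by
    rw [hkdef]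
    have h1 : (0:ℝ) < 1 - e := by linarith
    have := Real.pi_pos
    positivity
  have hs15 : Real.sqrt 2 ≤ 1.42 := by nlinarith [hs2, hs2pos.le]
  have hk7 : k ≤ 7 := by
    have h1 : (1 - e) * Real.sqrt 2 ≤ 1.5 * 1.42 := by
      have : (1 - e) * Real.sqrt 2 ≤ 1 * 1.42 :=
        mul_le_mul (by linarith) hs15 hs2pos.le (by norm_num)
      linarith
    rw [hkdef]
    nlinarith
  have hq31 : q ≤ 1 / 31 := by nlinarith
  have hq21 : q ^ 2 ≤ 1 / 961 := by nlinarith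
  have hq4 : q ^ 4 ≤ q ^ 2 := by nlinarith [mul_pos hq hq]
  have hpq4 : 2 * π ^ 2 * q ^ 4 ≤ 1 := by nlinarith [mul_pos hq hq]
  have hx0 : 0 < k * q := by positivity
  have hx1 : k * q ≤ 1 := by nlinarith
  have hθ0 : 0 < k * q ^ 3 := by positivity
  have hθx : k * q ^ 3 ≤ k * q := by nlinarith
  have hθ1 : k * q ^ 3 ≤ 1 := le_trans hθx hx1
  have hy0 : 0 < 2 * π * q ^ 2 := by positivity
  have hy2 : 2 * π * q ^ 2 ≤ 2 := by nlinarith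
  -- bounds
  have hc_lo : 1 - 2 * π ^ 2 * q ^ 4 ≤ Real.cos (2 * π * q ^ 2) := by
    have := Real.one_sub_sq_div_two_le_cos (x := 2 * π * q ^ 2)
    nlinarith [this]
  have hc_hi : Real.cos (2 * π * q ^ 2) ≤ 1 - 2 * π ^ 2 * q ^ 4 + π ^ 4 * q ^ 8 := by
    have := cos_le_quartic hy0 hy2
    nlinarith [this]
  have hcx_lo : 1 - (k * q) ^ 2 / 2 ≤ Real.cos (k * q) := Real.one_sub_sq_div_two_le_cos
  have hsθ_hi : Real.sin (k * q ^ 3) ≤ k * q ^ 3 := (Real.sin_lt hθ0).le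
  have hsx_lo : k * q - (k * q) ^ 3 / 4 ≤ Real.sin (k * q) :=
    (by have := Real.sin_gt_sub_cube hx0; linarith [pow_pos hx0 3])
  -- A upper bound
  have hsθ0 : 0 ≤ Real.sin (k * q ^ 3) :=
    Real.sin_nonneg_of_nonneg_of_le_pi hθ0.le (by nlinarith)
  have hcos1 : Real.cos (2 * π * q ^ 2) ≤ 1 := Real.cos_le_one _
  have hA : (1 + Real.cos (2 * π * q ^ 2)) * (1 - Real.cos (k * q))
        * Real.sin (k * q ^ 3)
      ≤ 2 * ((k * q) ^ 2 / 2) * (k * q ^ 3) := by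
    have hcx1 : Real.cos (k * q) ≤ 1 := Real.cos_le_one _
    have h1 : (1 + Real.cos (2 * π * q ^ 2)) * (1 - Real.cos (k * q))
        ≤ 2 * ((k * q) ^ 2 / 2) :=
      mul_le_mul (by linarith) (by linarith) (by linarith) (by norm_num)
    refine mul_le_mul h1 hsθ_hi hsθ0 (by positivity)
  -- B lower bound
  have hc0 : 0 ≤ Real.cos (2 * π * q ^ 2) := by nlinarith
  have hB : (2 * π ^ 2 * q ^ 4 - π ^ 4 * q ^ 8) * (k * q - (k * q) ^ 3 / 4)
      ≤ (1 - Real.cos (2 * π * q ^ 2) * Real.cos (k * q ^ 3)) * Real.sin (k * q) := by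
    have h1 : 1 - Real.cos (2 * π * q ^ 2) ≤
        1 - Real.cos (2 * π * q ^ 2) * Real.cos (k * q ^ 3) := by
      nlinarith [Real.cos_le_one (k * q ^ 3)]
    have h2 : 2 * π ^ 2 * q ^ 4 - π ^ 4 * q ^ 8 ≤ 1 - Real.cos (2 * π * q ^ 2) := by
      linarith
    have h3 : (0:ℝ) ≤ k * q - (k * q) ^ 3 / 4 := by nlinarith
    exact mul_le_mul (le_trans h2 h1) hsx_lo h3 (by linarith)
  have key := arith_neg π k q e hp3 hp4 he he2 hk2 hk0 hk7 hq hq2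
  linarith [hA, hB, key]

/-- For every fixed `ε > 0` and all sufficiently large `n`, the function
`g(θ) = (1/2 + cos(2π/n)) sin(θ(n-1)) - (1/2) sin(θ(n+1)) - sin(θn) + (1 + cos(2π/n)) sin θ`
has a root in the interval `((1-ε)√2 π n^{-3/2}, (1+ε)√2 π n^{-3/2})`. -/
theorem rudvalis_stmt_13 (ε : ℝ) (hε : 0 < ε) :
    ∃ N : ℕ, ∀ n : ℕ, N ≤ n →
      ∃ θ : ℝ,
        θ ∈ Set.Ioo ((1 - ε) * Real.sqrt 2 * π * (n : ℝ) ^ (-(3 : ℝ) / 2))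
                     ((1 + ε) * Real.sqrt 2 * π * (n : ℝ) ^ (-(3 : ℝ) / 2)) ∧
        (1 / 2 + Real.cos (2 * π / n)) * Real.sin (θ * ((n : ℝ) - 1))
          - (1 / 2) * Real.sin (θ * ((n : ℝ) + 1))
          - Real.sin (θ * n)
          + (1 + Real.cos (2 * π / n)) * Real.sin θ = 0 := by
  obtain ⟨e, hedef⟩ : ∃ e : ℝ, e = min ε (1/2) := ⟨_, rfl⟩
  have he : 0 < e := hedef ▸ lt_min hε (by norm_num)
  have he2 : e ≤ 1/2 := hedef ▸ min_le_right _ _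
  have heε : e ≤ ε := hedef ▸ min_le_left _ _
  obtain ⟨N₀, hN₀⟩ := exists_nat_gt (500 / e)
  refine ⟨N₀ + 1, fun n hn => ?_⟩
  have hn1 : 1 ≤ n := le_trans (Nat.le_add_left 1 N₀) hn
  have hs1 : (1:ℝ) ≤ (n:ℝ) := by exact_mod_cast hn1
  have hs0 : (0:ℝ) < (n:ℝ) := by linarith
  have hngt : 500 / e < (n:ℝ) := by
    have : (N₀:ℝ) < (n:ℝ) := by exact_mod_cast Nat.lt_of_lt_of_le (Nat.lt_succ_self N₀) hn
    linarith
  obtain ⟨q, hqdef⟩ : ∃ q : ℝ, q = (Real.sqrt (n:ℝ))⁻¹ := ⟨_, rfl⟩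
  have hsq0 : 0 < Real.sqrt (n:ℝ) := Real.sqrt_pos.mpr hs0
  have hq : 0 < q := by rw [hqdef]; positivity
  have hq2 : q ^ 2 = 1 / (n:ℝ) := by
    rw [hqdef, inv_pow, Real.sq_sqrt hs0.le, one_div]
  have hq2' : q ^ 2 ≤ e / 500 := by
    have h1 : 500 < (n:ℝ) * e := (div_lt_iff₀ he).mp hngt
    rw [hq2, div_le_div_iff₀ hs0 (by norm_num)]
    nlinarith
  have hr : (n:ℝ) ^ (-(3:ℝ) / 2) = q ^ 3 := by
    have h1 : (n:ℝ) ^ (-(3:ℝ) / 2) = ((n:ℝ) ^ ((3:ℝ) / 2))⁻¹ := by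
      rw [← Real.rpow_neg hs0.le]; norm_num
    have h2 : (n:ℝ) ^ ((3:ℝ) / 2) = ((n:ℝ) ^ ((1:ℝ) / 2)) ^ (3:ℕ) := by
      rw [← Real.rpow_natCast ((n:ℝ) ^ ((1:ℝ)/2)) 3, ← Real.rpow_mul hs0.le]
      norm_num
    rw [h1, h2, ← Real.sqrt_eq_rpow, hqdef, ← inv_pow]
  have hsq3 : (n:ℝ) * q ^ 3 = q := by
    have hq2'' : (n:ℝ) * q ^ 2 = 1 := by
      rw [hq2]; field_simp
    calc (n:ℝ) * q ^ 3 = ((n:ℝ) * q ^ 2) * q := by ring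
      _ = q := by rw [hq2'']; ring
  have h2pi : 2 * π / (n:ℝ) = 2 * π * q ^ 2 := by rw [hq2]; ring
  -- endpoints
  obtain ⟨a, hadef⟩ : ∃ a : ℝ, a = (1 - e) * Real.sqrt 2 * π * q ^ 3 := ⟨_, rfl⟩
  obtain ⟨b, hbdef⟩ : ∃ b : ℝ, b = (1 + e) * Real.sqrt 2 * π * q ^ 3 := ⟨_, rfl⟩
  have hs2pos : (0:ℝ) < Real.sqrt 2 := Real.sqrt_pos.mpr (by norm_num)
  have hpi := Real.pi_pos
  have hq3 : 0 < q ^ 3 := by positivity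
  have hab : a < b := by
    rw [hadef, hbdef]
    have h1 : (1 - e) * Real.sqrt 2 * π < (1 + e) * Real.sqrt 2 * π := by
      nlinarith [mul_pos (mul_pos he hs2pos) hpi]
    exact (mul_lt_mul_iff_left₀ hq3).mpr h1
  obtain ⟨g, hgdef⟩ : ∃ g : ℝ → ℝ, g = fun θ : ℝ =>
      (1 / 2 + Real.cos (2 * π / (n:ℝ))) * Real.sin (θ * ((n : ℝ) - 1))
        - (1 / 2) * Real.sin (θ * ((n : ℝ) + 1))
        - Real.sin (θ * (n:ℝ))
        + (1 + Real.cos (2 * π / (n:ℝ))) * Real.sin θ := ⟨_, rfl⟩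
  have hgform : ∀ θ : ℝ,
      g θ = (1 + Real.cos (2 * π * q ^ 2)) * (1 - Real.cos (θ * (n:ℝ))) * Real.sin θ
        - (1 - Real.cos (2 * π * q ^ 2) * Real.cos θ) * Real.sin (θ * (n:ℝ)) := by
    intro θ
    have h1 : θ * ((n:ℝ) - 1) = θ * (n:ℝ) - θ := by ring
    have h2 : θ * ((n:ℝ) + 1) = θ * (n:ℝ) + θ := by ring
    rw [hgdef]
    simp only [h1, h2, h2pi]
    rw [← g_eq (Real.cos (2 * π * q ^ 2)) θ (θ * (n:ℝ))]
  have hga : g a < 0 := by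
    rw [hgform]
    have has : a * (n:ℝ) = ((1 - e) * Real.sqrt 2 * π) * q := by
      rw [hadef, mul_comm _ ((n:ℝ)), ← mul_assoc, mul_comm ((n:ℝ)) _, mul_assoc, hsq3]
    rw [has, hadef]
    exact rud_sign_neg e q ((1 - e) * Real.sqrt 2 * π) he he2 hq hq2' rfl
  have hgb : 0 < g b := by
    rw [hgform]
    have hbs : b * (n:ℝ) = ((1 + e) * Real.sqrt 2 * π) * q := by
      rw [hbdef, mul_comm _ ((n:ℝ)), ← mul_assoc, mul_comm ((n:ℝ)) _, mul_assoc, hsq3]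
    rw [hbs, hbdef]
    exact rud_sign_pos e q ((1 + e) * Real.sqrt 2 * π) he he2 hq hq2' rfl
  have hgc : ContinuousOn g (Set.Icc a b) := by
    apply Continuous.continuousOn
    rw [hgdef]
    fun_prop
  have h0mem : (0:ℝ) ∈ Set.Ioo (g a) (g b) := ⟨hga, hgb⟩
  obtain ⟨θ, hθmem, hθval⟩ := intermediate_value_Ioo hab.le hgc h0mem
  refine ⟨θ, ⟨?_, ?_⟩, ?_⟩
  · have h1 : (1 - ε) * Real.sqrt 2 * π * (n:ℝ) ^ (-(3:ℝ)/2) ≤ a := by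
      rw [hadef, hr]
      have h2 : (1 - ε) * Real.sqrt 2 * π ≤ (1 - e) * Real.sqrt 2 * π := by
        nlinarith [mul_pos hs2pos hpi]
      exact mul_le_mul_of_nonneg_right h2 hq3.le
    exact lt_of_le_of_lt h1 hθmem.1
  · have h1 : b ≤ (1 + ε) * Real.sqrt 2 * π * (n:ℝ) ^ (-(3:ℝ)/2) := by
      rw [hbdef, hr]
      have h2 : (1 + e) * Real.sqrt 2 * π ≤ (1 + ε) * Real.sqrt 2 * π := by
        nlinarith [mul_pos hs2pos hpi]
      exact mul_le_mul_of_nonneg_right h2 hq3.le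
    exact lt_of_lt_of_le hθmem.2 h1
  · rw [hgdef] at hθval
    exact hθval
end
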